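/- arXiv:1807.09523 — 2 statements merged into one kernel-verified Lean document; each statement's English description precedes it below -/
import Mathlib

section
/- For the sticky random walk X on {0,...,N+1} with boundary rates 1/(2M), the transition probability from N+1 to 0 in time t satisfies p_t(N+1, 0) ≤ t/(2MN). -/
/-- Jump rates of the sticky random walk on `{0,…,N+1}`: rate `1/2` between nearest
neighbours in the bulk `{1,…,N}`, and rate `1/(2M)` from the boundary sites `0` and `N+1`
to their unique neighbours. -/
noncomputable def stickyRate (N : ℕ) (M : ℝ) (x y : Fin (N + 2)) : ℝ :=
  if 1 ≤ (x : ℕ) ∧ (x : ℕ) ≤ N ∧ ((y : ℕ) = (x : ℕ) + 1 ∨ (y : ℕ) + 1 = (x : ℕ)) then 1 / 2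
  else if (x : ℕ) = 0 ∧ (y : ℕ) = 1 then 1 / (2 * M)
  else if (x : ℕ) = N + 1 ∧ (y : ℕ) = N then 1 / (2 * M)
  else 0

/-- Generator matrix of the sticky random walk. -/
noncomputable def stickyGen (N : ℕ) (M : ℝ) : Matrix (Fin (N + 2)) (Fin (N + 2)) ℝ :=
  Matrix.of fun x y =>
    if x = y then -(∑ z, stickyRate N M x z) else stickyRate N M x y

/-!
The function `a y = 1 - y / (N + 1)` is harmonic for the walk in the bulk, and the generator `Q`
sends it to `∓ 1 / (2M(N+1))` at the two boundary sites, so `Q a ≤ b` for the constant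
`b = 1 / (2M(N+1))`, which `Q` kills. As `Q` has nonnegative off-diagonal entries, `exp (sQ)` is
entrywise nonnegative for `s ≥ 0`; hence `s ↦ a + s b - exp (sQ) a`, whose derivative is
`exp (sQ) (b - Q a)`, is monotone and `exp (tQ) a ≤ a + t b`. Finally `a` dominates the indicator
of `0` and vanishes at `N + 1`, so `p_t(N+1, 0) ≤ (exp (tQ) a)(N+1) ≤ t / (2M(N+1))`.
-/
open NormedSpace
open scoped Matrix

namespace Matrix

attribute [local instance] Matrix.linftyOpNormedRing Matrix.linftyOpNormedAlgebra

theorem mulVec_apply_nonneg {m n : Type*} [Fintype n] {B : Matrix m n ℝ} {v : n → ℝ} {i : m}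
    (hB : ∀ j, 0 ≤ B i j) (hv : ∀ j, 0 ≤ v j) : 0 ≤ (B *ᵥ v) i :=
  Finset.sum_nonneg fun j _ => mul_nonneg (hB j) (hv j)

variable {ι : Type*} [Fintype ι] [DecidableEq ι]

theorem exp_apply_nonneg {A : Matrix ι ι ℝ} (hA : ∀ i j, 0 ≤ A i j) (i j : ι) :
    0 ≤ exp A i j := by
  have h := (LinearMap.toContinuousLinearMap (entryLinearMap ℝ ℝ i j)).map_tsum
    (expSeries_summable' (𝕂 := ℝ) A)
  rw [← congrFun (exp_eq_tsum ℝ) A] at h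
  simp only [LinearMap.coe_toContinuousLinearMap', entryLinearMap_apply] at h
  rw [h]
  exact tsum_nonneg fun k => mul_nonneg (by positivity) (pow_apply_nonneg hA k i j)

theorem exp_smul_apply_nonneg {A : Matrix ι ι ℝ} (hA : ∀ i j, i ≠ j → 0 ≤ A i j) {t : ℝ}
    (ht : 0 ≤ t) (i j : ι) : 0 ≤ exp (t • A) i j := by
  obtain ⟨c, hc⟩ : ∃ c : ℝ, ∀ i, 0 ≤ A i i + c :=
    ⟨∑ k, |A k k|, fun i => by
      have := Finset.single_le_sum (f := fun k => |A k k|) (fun k _ => abs_nonneg _)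
        (Finset.mem_univ i)
      linarith [neg_abs_le (A i i)]⟩
  have hshift : ∀ i j, 0 ≤ (t • (A + c • 1)) i j := by
    intro i j
    refine mul_nonneg ht ?_
    rcases eq_or_ne i j with rfl | hij
    · simpa using hc i
    · simpa [one_apply_ne hij] using hA i j hij
  have hsplit : t • A = t • (A + c • 1) + diagonal fun _ => -(t * c) := by
    rw [← smul_one_eq_diagonal]
    module
  have hcomm : Commute (t • (A + c • 1)) (diagonal fun _ => -(t * c)) := by
    rw [← smul_one_eq_diagonal]
    exact (Commute.one_right _).smul_right _
  rw [hsplit, Matrix.exp_add_of_commute _ _ hcomm, exp_diagonal, mul_diagonal, Pi.exp_def,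
    ← Real.exp_eq_exp_ℝ]
  exact mul_nonneg (exp_apply_nonneg hshift i j) (Real.exp_pos _).le

theorem hasDerivAt_exp_smul_apply (A : Matrix ι ι ℝ) (i j : ι) (s : ℝ) :
    HasDerivAt (fun u : ℝ => exp (u • A) i j) ((exp (s • A) * A) i j) s :=
  (LinearMap.toContinuousLinearMap (entryLinearMap ℝ ℝ i j)).hasFDerivAt.comp_hasDerivAt (x := s)
    (hasDerivAt_exp_smul_const A s)

theorem hasDerivAt_exp_smul_mulVec_apply (A : Matrix ι ι ℝ) (v : ι → ℝ) (i : ι) (s : ℝ) :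
    HasDerivAt (fun u : ℝ => (exp (u • A) *ᵥ v) i) ((exp (s • A) *ᵥ (A *ᵥ v)) i) s := by
  rw [mulVec_mulVec]
  exact HasDerivAt.fun_sum fun j _ => (hasDerivAt_exp_smul_apply A i j s).mul_const (v j)

theorem exp_smul_mulVec_of_mulVec_eq_zero {A : Matrix ι ι ℝ} {v : ι → ℝ} (hv : A *ᵥ v = 0)
    (t : ℝ) : exp (t • A) *ᵥ v = v := by
  funext i
  have hderiv s := hasDerivAt_exp_smul_mulVec_apply A v i s
  simp only [hv, mulVec_zero, Pi.zero_apply] at hderiv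
  simpa using is_const_of_deriv_eq_zero (fun s => (hderiv s).differentiableAt)
    (fun s => (hderiv s).deriv) t 0

theorem exp_smul_mulVec_apply_le {A : Matrix ι ι ℝ} (hA : ∀ i j, i ≠ j → 0 ≤ A i j)
    {a b : ι → ℝ} (hab : ∀ i, (A *ᵥ a) i ≤ b i) (hb : A *ᵥ b = 0) {t : ℝ} (ht : 0 ≤ t)
    (x : ι) : (exp (t • A) *ᵥ a) x ≤ a x + t * b x := by
  set φ : ℝ → ℝ := fun s => a x + s * b x - (exp (s • A) *ᵥ a) x
  have hφ : ∀ s, HasDerivAt φ ((exp (s • A) *ᵥ (b - A *ᵥ a)) x) s := by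
    intro s
    refine ((((hasDerivAt_id s).mul_const (b x)).const_add (a x)).sub
      (hasDerivAt_exp_smul_mulVec_apply A a x s)).congr_deriv ?_
    rw [mulVec_sub, exp_smul_mulVec_of_mulVec_eq_zero hb, Pi.sub_apply, one_mul]
  have hmono : MonotoneOn φ (Set.Ici 0) := by
    refine monotoneOn_of_hasDerivWithinAt_nonneg (convex_Ici 0)
      (fun s _ => (hφ s).continuousAt.continuousWithinAt) (fun s _ => (hφ s).hasDerivWithinAt)
      fun s hs => mulVec_apply_nonneg ?_ fun j => sub_nonneg.2 (hab j)
    rw [interior_Ici] at hs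
    exact exp_smul_apply_nonneg hA hs.le x
  have := hmono Set.self_mem_Ici ht ht
  simp only [φ, zero_smul, exp_zero, one_mulVec, zero_mul, add_zero, sub_self] at this
  linarith

theorem exp_smul_apply_le_mulVec_apply {A : Matrix ι ι ℝ} (hA : ∀ i j, i ≠ j → 0 ≤ A i j)
    {t : ℝ} (ht : 0 ≤ t) {a : ι → ℝ} (ha : ∀ i, 0 ≤ a i) {j : ι} (hj : 1 ≤ a j) (i : ι) :
    exp (t • A) i j ≤ (exp (t • A) *ᵥ a) i :=
  calc exp (t • A) i j ≤ exp (t • A) i j * a j :=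
        le_mul_of_one_le_right (exp_smul_apply_nonneg hA ht i j) hj
    _ ≤ ∑ k, exp (t • A) i k * a k :=
        Finset.single_le_sum (f := fun k => exp (t • A) i k * a k)
          (fun k _ => mul_nonneg (exp_smul_apply_nonneg hA ht i k) (ha k)) (Finset.mem_univ j)

end Matrix

section StickyWalk

variable {N : ℕ} {M : ℝ}

theorem stickyRate_nonneg (hM : 0 ≤ M) (x y : Fin (N + 2)) : 0 ≤ stickyRate N M x y := by
  unfold stickyRate
  split_ifs <;> positivity

theorem stickyRate_self (x : Fin (N + 2)) : stickyRate N M x x = 0 := by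
  unfold stickyRate
  split_ifs <;> first | rfl | omega

theorem stickyRate_eq_zero {x y : Fin (N + 2)} (h₁ : (y : ℕ) ≠ x + 1) (h₂ : (y : ℕ) + 1 ≠ x) :
    stickyRate N M x y = 0 := by
  unfold stickyRate
  split_ifs <;> first | rfl | omega

theorem stickyGen_apply_of_ne {x y : Fin (N + 2)} (h : x ≠ y) :
    stickyGen N M x y = stickyRate N M x y := by
  simp [stickyGen, h]

theorem stickyGen_mulVec_apply (f : Fin (N + 2) → ℝ) (x : Fin (N + 2)) :
    (stickyGen N M *ᵥ f) x = ∑ y, stickyRate N M x y * (f y - f x) := by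
  have h : ∀ y, stickyGen N M x y * f y
      = stickyRate N M x y * f y - if x = y then (∑ z, stickyRate N M x z) * f x else 0 := by
    intro y
    rcases eq_or_ne x y with rfl | hxy
    · simp [stickyGen, stickyRate_self]
    · simp [stickyGen, hxy]
  simp only [Matrix.mulVec, dotProduct, h, Finset.sum_sub_distrib, Finset.sum_ite_eq,
    Finset.mem_univ, if_true, mul_sub, Finset.sum_mul]

theorem sum_stickyRate_mul_sub_le (hM : 0 < M) (x : Fin (N + 2)) :
    ∑ y, stickyRate N M x y * ((x : ℝ) - y) ≤ 1 / (2 * M) := by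
  rcases (show (x : ℕ) = 0 ∨ (1 ≤ (x : ℕ) ∧ (x : ℕ) ≤ N) ∨ (x : ℕ) = N + 1 by omega)
    with hx | ⟨hx₁, hx₂⟩ | hx
  · rw [Fintype.sum_eq_single ⟨1, by omega⟩ fun y hy => by
      rw [stickyRate_eq_zero (by simp only [ne_eq, Fin.ext_iff] at hy; omega) (by omega),
        zero_mul]]
    simp [stickyRate, hx, hM.le]
  · rw [Finset.sum_eq_add (⟨x + 1, by omega⟩ : Fin (N + 2)) ⟨x - 1, by omega⟩
      (by rw [Ne, Fin.mk.injEq]; omega)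
      (fun y _ hy => by
        simp only [ne_eq, Fin.ext_iff] at hy
        rw [stickyRate_eq_zero (by omega) (by omega), zero_mul])
      (by simp) (by simp)]
    simp [stickyRate, hx₁, hx₂, hM.le]
  · rw [Fintype.sum_eq_single ⟨N, by omega⟩ fun y hy => by
      rw [stickyRate_eq_zero (by omega) (by simp only [ne_eq, Fin.ext_iff] at hy; omega), zero_mul]]
    simp [stickyRate, hx]

theorem stickyGen_mulVec_const (c : ℝ) : stickyGen N M *ᵥ (fun _ => c) = 0 := by
  funext x
  simp [stickyGen_mulVec_apply]

theorem stickyGen_mulVec_apply_le (hM : 0 < M) (x : Fin (N + 2)) :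
    (stickyGen N M *ᵥ fun y => 1 - (y : ℝ) / (N + 1)) x ≤ 1 / (2 * M * (N + 1)) := by
  have hdiff : ∀ y : Fin (N + 2), 1 - (y : ℝ) / (N + 1) - (1 - (x : ℝ) / (N + 1))
      = ((x : ℝ) - y) / (N + 1) := fun y => by ring
  rw [stickyGen_mulVec_apply]
  simp only [hdiff, mul_div_assoc', ← Finset.sum_div]
  rw [← div_div]
  exact div_le_div_of_nonneg_right (sum_stickyRate_mul_sub_le hM x) (by positivity)

end StickyWalk

/-- For the sticky random walk `X` on `{0,…,N+1}` with boundary rates `1/(2M)`,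
the transition probability `p_t(N+1, 0) = (e^{tQ})_{N+1,0}` from `N+1` to `0` in time `t`
satisfies `p_t(N+1, 0) ≤ t/(2MN)`. -/
theorem statement5 (N : ℕ) (hN : 1 ≤ N) (M : ℝ) (hM : 0 < M) (t : ℝ) (ht : 0 ≤ t) :
    NormedSpace.exp (t • stickyGen N M) (Fin.last (N + 1)) 0 ≤ t / (2 * M * N) := by
  set a : Fin (N + 2) → ℝ := fun y => 1 - (y : ℝ) / (N + 1)
  have hQ : ∀ x y, x ≠ y → 0 ≤ stickyGen N M x y := fun x y h =>
    (stickyGen_apply_of_ne h).symm ▸ stickyRate_nonneg hM.le x y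
  have ha : ∀ y, 0 ≤ a y := fun y => by
    have : (y : ℝ) ≤ N + 1 := by exact_mod_cast Nat.lt_succ_iff.1 y.isLt
    simp only [a, sub_nonneg]
    exact div_le_one_of_le₀ this (by positivity)
  calc exp (t • stickyGen N M) (Fin.last (N + 1)) 0
      ≤ (exp (t • stickyGen N M) *ᵥ a) (Fin.last (N + 1)) :=
        Matrix.exp_smul_apply_le_mulVec_apply hQ ht ha (by simp [a]) _
    _ ≤ a (Fin.last (N + 1)) + t * (1 / (2 * M * (N + 1))) :=
        Matrix.exp_smul_mulVec_apply_le hQ (stickyGen_mulVec_apply_le hM)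
          (stickyGen_mulVec_const _) ht _
    _ = t / (2 * M * (N + 1)) := by
        rw [show a (Fin.last (N + 1)) = 0 by simp [a, Nat.cast_add_one_ne_zero]]
        ring
    _ ≤ t / (2 * M * N) := by
        gcongr
        linarith
end

section
/- Boundary density regularity: the left-boundary density ρ_-(t) = ρ(0,t) of the reservoir system with M = N^{1+α} satisfies |ρ_-(t) − ρ_-(s)| ≤ N^{-(1+α)} min(C√|t−s|, N) + C N^{-(2+α)}|t−s| for a universal constant C. -/
lemma key_step (C₀ : ℝ) (hC₀ : 0 < C₀) (N : ℕ) (hN : 1 ≤ N) (α : ℝ) (hα : 0 < α)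
    (p : ℝ → Matrix (Fin (N + 2)) (Fin (N + 2)) ℝ) (ρ₀ : Fin (N + 2) → ℝ)
    (hρ : ∀ x, 0 ≤ ρ₀ x ∧ ρ₀ x ≤ 1)
    (hpos : ∀ t : ℝ, 0 ≤ t → ∀ x y, 0 ≤ p t x y)
    (hstoch : ∀ t : ℝ, 0 ≤ t → ∀ x, ∑ y, p t x y = 1)
    (hsg : ∀ s : ℝ, 0 ≤ s → ∀ t : ℝ, 0 ≤ t → p (s + t) = p s * p t)
    (hrev : ∀ t : ℝ, 0 ≤ t → ∀ x : Fin (N + 2), 1 ≤ (x : ℕ) → (x : ℕ) ≤ N →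
      (N : ℝ) ^ (1 + α) * p t 0 x = p t x 0)
    (hrevlast : ∀ t : ℝ, 0 ≤ t → p t 0 (Fin.last (N + 1)) = p t (Fin.last (N + 1)) 0)
    (hker : ∀ t : ℝ, 0 ≤ t →
      ∑ x ∈ Finset.univ.filter (fun x : Fin (N + 2) => 1 ≤ (x : ℕ) ∧ (x : ℕ) ≤ N),
          p t x 0 ≤ min (C₀ * Real.sqrt t) N)
    (hkerlast : ∀ t : ℝ, 0 ≤ t →
      p t (Fin.last (N + 1)) 0 ≤ t / (2 * (N : ℝ) ^ (1 + α) * N))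
    (s : ℝ) (hs : 0 ≤ s) (t : ℝ) (ht : 0 ≤ t) (hst : s ≤ t) :
    |(∑ y, p t 0 y * ρ₀ y) - ∑ y, p s 0 y * ρ₀ y| ≤
      (N : ℝ) ^ (-(1 + α)) * min ((C₀ + 1) * Real.sqrt |t - s|) N +
        (C₀ + 1) * (N : ℝ) ^ (-(2 + α)) * |t - s| := by
  have hNpos : (0:ℝ) < N := by exact_mod_cast Nat.lt_of_lt_of_le Nat.zero_lt_one hN
  have hMpos : (0:ℝ) < (N:ℝ) ^ (1 + α) := Real.rpow_pos_of_pos hNpos _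
  set u := t - s with hu
  have hu0 : 0 ≤ u := by simp [hu]; linarith
  have habs : |t - s| = u := abs_of_nonneg hu0
  set f : ℝ → Fin (N + 2) → ℝ := fun r z => ∑ y, p r z y * ρ₀ y with hf
  have hf01 : ∀ z, 0 ≤ f s z ∧ f s z ≤ 1 := by
    intro z
    constructor
    · exact Finset.sum_nonneg fun y _ => mul_nonneg (hpos s hs z y) (hρ y).1
    · calc ∑ y, p s z y * ρ₀ y ≤ ∑ y, p s z y * 1 := by
            refine Finset.sum_le_sum fun y _ => ?_
            exact mul_le_mul_of_nonneg_left (hρ y).2 (hpos s hs z y)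
        _ = 1 := by simpa using hstoch s hs z
  have hpt : p t = p u * p s := by
    rw [← hsg u hu0 s hs]; congr 1; ring
  have hexp : f t 0 = ∑ z, p u 0 z * f s z := by
    simp only [hf, hpt, Matrix.mul_apply, Finset.sum_mul, Finset.mul_sum]
    rw [Finset.sum_comm]
    congr 1; ext z; congr 1; ext y; ring
  have hrow : ∑ z, p u 0 z = 1 := hstoch u hu0 0
  have hdiff : f t 0 - f s 0 = ∑ z, p u 0 z * (f s z - f s 0) := by
    have : ∑ z, p u 0 z * (f s z - f s 0)
        = (∑ z, p u 0 z * f s z) - (∑ z, p u 0 z) * f s 0 := by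
      rw [Finset.sum_mul]; rw [← Finset.sum_sub_distrib]; congr 1; ext z; ring
    rw [this, hrow, hexp]; ring
  set A := Finset.univ.filter (fun x : Fin (N + 2) => 1 ≤ (x : ℕ) ∧ (x : ℕ) ≤ N) with hA
  have h0A : (0 : Fin (N + 2)) ∉ A := by simp [hA]
  have hlastA : Fin.last (N + 1) ∉ A := by
    simp only [hA, Finset.mem_filter, Finset.mem_univ, true_and, Fin.val_last]
    omega
  have h0last : (0 : Fin (N + 2)) ≠ Fin.last (N + 1) := by
    intro h
    have := congrArg Fin.val h
    simp [Fin.last] at this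
  have huniv : (Finset.univ : Finset (Fin (N + 2)))
      = insert 0 (insert (Fin.last (N + 1)) A) := by
    ext z
    simp only [Finset.mem_univ, true_iff, Finset.mem_insert, hA, Finset.mem_filter]
    rcases Nat.lt_or_ge (z : ℕ) 1 with h1 | h1
    · left; ext; simpa using Nat.lt_one_iff.mp h1
    rcases Nat.lt_or_ge (z : ℕ) (N + 1) with h2 | h2
    · right; right; exact ⟨trivial, h1, by omega⟩
    · right; left; ext; simp [Fin.last]; omega
  have hsum_split : ∀ g : Fin (N + 2) → ℝ,
      ∑ z, g z = g 0 + g (Fin.last (N + 1)) + ∑ z ∈ A, g z := by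
    intro g
    rw [huniv, Finset.sum_insert (by
        simp only [Finset.mem_insert]; push_neg; exact ⟨h0last, h0A⟩),
      Finset.sum_insert hlastA]
    ring
  -- main bound
  have hbound : |f t 0 - f s 0| ≤
      (∑ z ∈ A, p u 0 z) + p u 0 (Fin.last (N + 1)) := by
    rw [hdiff]
    calc |∑ z, p u 0 z * (f s z - f s 0)| ≤ ∑ z, |p u 0 z * (f s z - f s 0)| :=
          Finset.abs_sum_le_sum_abs _ _
      _ = ∑ z, p u 0 z * |f s z - f s 0| := by
          congr 1; ext z; rw [abs_mul, abs_of_nonneg (hpos u hu0 0 z)]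
      _ ≤ (∑ z ∈ A, p u 0 z) + p u 0 (Fin.last (N + 1)) := by
          rw [hsum_split (fun z => p u 0 z * |f s z - f s 0|)]
          have habs1 : ∀ z, |f s z - f s 0| ≤ 1 := fun z =>
            abs_sub_le_iff.mpr ⟨by linarith [(hf01 z).2, (hf01 0).1],
              by linarith [(hf01 z).1, (hf01 0).2]⟩
          have h1 : p u 0 0 * |f s 0 - f s 0| = 0 := by simp
          have h2 : p u 0 (Fin.last (N + 1)) * |f s (Fin.last (N + 1)) - f s 0|
              ≤ p u 0 (Fin.last (N + 1)) := by
            calc p u 0 (Fin.last (N + 1)) * |f s (Fin.last (N + 1)) - f s 0|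
                ≤ p u 0 (Fin.last (N + 1)) * 1 :=
                  mul_le_mul_of_nonneg_left (habs1 _) (hpos u hu0 0 _)
              _ = _ := mul_one _
          have h3 : ∑ z ∈ A, p u 0 z * |f s z - f s 0| ≤ ∑ z ∈ A, p u 0 z := by
            refine Finset.sum_le_sum fun z _ => ?_
            calc p u 0 z * |f s z - f s 0| ≤ p u 0 z * 1 :=
                  mul_le_mul_of_nonneg_left (habs1 _) (hpos u hu0 0 _)
              _ = _ := mul_one _
          linarith
  -- bulk term
  have hbulk : ∑ z ∈ A, p u 0 z ≤ (N : ℝ) ^ (-(1 + α)) * min (C₀ * Real.sqrt u) N := by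
    have heq : ∑ z ∈ A, p u 0 z = (N : ℝ) ^ (-(1 + α)) * ∑ z ∈ A, p u z 0 := by
      rw [Finset.mul_sum]
      refine Finset.sum_congr rfl fun z hz => ?_
      simp only [hA, Finset.mem_filter] at hz
      have := hrev u hu0 z hz.2.1 hz.2.2
      rw [← this]
      rw [Real.rpow_neg hNpos.le]
      field_simp
    rw [heq]
    have hrpos : (0:ℝ) < (N : ℝ) ^ (-(1 + α)) := Real.rpow_pos_of_pos hNpos _
    exact mul_le_mul_of_nonneg_left (hker u hu0) hrpos.le
  -- boundary term
  have hlast : p u 0 (Fin.last (N + 1)) ≤ (C₀ + 1) * (N : ℝ) ^ (-(2 + α)) * u := by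
    rw [hrevlast u hu0]
    refine le_trans (hkerlast u hu0) ?_
    have h2 : (N : ℝ) ^ ((2:ℝ) + α) = (N : ℝ) ^ (1 + α) * N := by
      rw [show (2:ℝ) + α = (1 + α) + 1 by ring, Real.rpow_add hNpos, Real.rpow_one]
    rw [Real.rpow_neg hNpos.le, h2, div_le_iff₀ (by positivity)]
    have hinv : ((N : ℝ) ^ (1 + α) * (N:ℝ))⁻¹ * ((N : ℝ) ^ (1 + α) * (N:ℝ)) = 1 := by
      field_simp
    calc u ≤ (C₀ + 1) * 2 * u := by nlinarith
      _ = (C₀ + 1) * ((N:ℝ)^(1+α) * (N:ℝ))⁻¹ * u * (2 * (N:ℝ)^(1+α) * (N:ℝ)) := by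
          rw [show (C₀ + 1) * ((N:ℝ)^(1+α) * (N:ℝ))⁻¹ * u * (2 * (N:ℝ)^(1+α) * (N:ℝ))
            = (C₀+1) * 2 * u * (((N:ℝ)^(1+α) * (N:ℝ))⁻¹ * ((N:ℝ)^(1+α) * (N:ℝ))) by ring,
            hinv, mul_one]
  have hmin : min (C₀ * Real.sqrt u) N ≤ min ((C₀ + 1) * Real.sqrt u) N := by
    refine min_le_min ?_ le_rfl
    nlinarith [Real.sqrt_nonneg u]
  have hfin : |f t 0 - f s 0| ≤
      (N : ℝ) ^ (-(1 + α)) * min ((C₀ + 1) * Real.sqrt u) N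
        + (C₀ + 1) * (N : ℝ) ^ (-(2 + α)) * u := by
    have hrpos : (0:ℝ) ≤ (N : ℝ) ^ (-(1 + α)) := (Real.rpow_pos_of_pos hNpos _).le
    calc |f t 0 - f s 0| ≤ (∑ z ∈ A, p u 0 z) + p u 0 (Fin.last (N + 1)) := hbound
      _ ≤ (N : ℝ) ^ (-(1 + α)) * min (C₀ * Real.sqrt u) N
            + (C₀ + 1) * (N : ℝ) ^ (-(2 + α)) * u := add_le_add hbulk hlast
      _ ≤ _ := by
          gcongr
  rw [habs]
  exact hfin

/-- boundary density regularity.  Let `p_t` be the transition kernel of the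
sticky random walk on `{0,…,N+1}` with reservoir size `M = N^{1+α}` (a stochastic semigroup
that is reversible w.r.t. the measure giving mass `M` to the two boundary sites), and let
`ρ(x,t) = E_x[ρ₀(X_t)] = ∑_y p_t(x,y)ρ₀(y)` with `ρ₀ : {0,…,N+1} → [0,1]`.  Assume the
kernel estimates `∑_{x=1}^N p_t(x,0) ≤ min(C₀√t, N)` and `p_t(N+1,0) ≤ t/(2MN)`.  Then the
left boundary density `ρ₋(t) = ρ(0,t)` satisfies, for a universal constant `C`,
`|ρ₋(t) − ρ₋(s)| ≤ N^{-(1+α)} min(C√|t−s|, N) + C N^{-(2+α)} |t−s|`. -/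
theorem statement12 :
    ∀ C₀ : ℝ, 0 < C₀ → ∃ C : ℝ, 0 < C ∧
      ∀ (N : ℕ), 1 ≤ N → ∀ (α : ℝ), 0 < α →
        ∀ (p : ℝ → Matrix (Fin (N + 2)) (Fin (N + 2)) ℝ) (ρ₀ : Fin (N + 2) → ℝ),
          (∀ x, 0 ≤ ρ₀ x ∧ ρ₀ x ≤ 1) →
          (∀ t : ℝ, 0 ≤ t → ∀ x y, 0 ≤ p t x y) →
          (∀ t : ℝ, 0 ≤ t → ∀ x, ∑ y, p t x y = 1) →
          p 0 = 1 →
          (∀ s : ℝ, 0 ≤ s → ∀ t : ℝ, 0 ≤ t → p (s + t) = p s * p t) →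
          (∀ t : ℝ, 0 ≤ t → ∀ x : Fin (N + 2), 1 ≤ (x : ℕ) → (x : ℕ) ≤ N →
            (N : ℝ) ^ (1 + α) * p t 0 x = p t x 0) →
          (∀ t : ℝ, 0 ≤ t → p t 0 (Fin.last (N + 1)) = p t (Fin.last (N + 1)) 0) →
          (∀ t : ℝ, 0 ≤ t →
            ∑ x ∈ Finset.univ.filter (fun x : Fin (N + 2) => 1 ≤ (x : ℕ) ∧ (x : ℕ) ≤ N),
                p t x 0 ≤ min (C₀ * Real.sqrt t) N) →
          (∀ t : ℝ, 0 ≤ t →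
            p t (Fin.last (N + 1)) 0 ≤ t / (2 * (N : ℝ) ^ (1 + α) * N)) →
          ∀ s : ℝ, 0 ≤ s → ∀ t : ℝ, 0 ≤ t →
            |(∑ y, p t 0 y * ρ₀ y) - ∑ y, p s 0 y * ρ₀ y| ≤
              (N : ℝ) ^ (-(1 + α)) * min (C * Real.sqrt |t - s|) N +
                C * (N : ℝ) ^ (-(2 + α)) * |t - s| := by
  intro C₀ hC₀
  refine ⟨C₀ + 1, by linarith, ?_⟩
  intro N hN α hα p ρ₀ hρ hpos hstoch _hp0 hsg hrev hrevlast hker hkerlast s hs t ht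
  rcases le_total s t with hst | hst
  · exact key_step C₀ hC₀ N hN α hα p ρ₀ hρ hpos hstoch hsg hrev hrevlast hker hkerlast
      s hs t ht hst
  · rw [abs_sub_comm ((∑ y, p t 0 y * ρ₀ y)) _, abs_sub_comm t s]
    exact key_step C₀ hC₀ N hN α hα p ρ₀ hρ hpos hstoch hsg hrev hrevlast hker hkerlast
      t ht s hs hst
end
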